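/- Let q be a real number with 0 < q < 1 and let t ∈ ℝ with 0 < t < 1. Then there exists a constant C > 0 (depending only on q and t) such that for every n ∈ ℕ and every z ∈ ℂ with Re(z) = t, one has |p_n(z)| ≤ C · q^{(1−t) n}. -/

import Mathlib

/-- The q-Pochhammer symbol `(x; q)_k = ∏_{j=0}^{k-1} (1 - x q^j)`. -/
noncomputable def qPoch (x q : ℝ) (k : ℕ) : ℝ := ∏ j ∈ Finset.range k, (1 - x * q ^ j)

/-- The q-binomial coefficient `[n, k]_q = (q; q)_n / ((q; q)_k (q; q)_{n-k})`. -/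
noncomputable def qbinom (q : ℝ) (n k : ℕ) : ℝ :=
  qPoch q q n / (qPoch q q k * qPoch q q (n - k))

/-- `q^z = exp(z · log q)` for a real `q > 0` and complex `z`. -/
noncomputable def cpw (q : ℝ) (z : ℂ) : ℂ := Complex.exp (z * (Real.log q : ℂ))

/-- `p_n(z) = (q^n / √((q²; q²)_n)) · Σ_{k=0}^{n} [n, k]_{q²} · q^{z(n-2k)}`. -/
noncomputable def pfun (q : ℝ) (n : ℕ) (z : ℂ) : ℂ :=
  ((q ^ n / Real.sqrt (qPoch (q ^ 2) (q ^ 2) n) : ℝ) : ℂ) *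
    ∑ k ∈ Finset.range (n + 1),
      (qbinom (q ^ 2) n k : ℂ) * cpw q (z * ((n : ℂ) - 2 * (k : ℂ)))

/-!
On the line `Re z = t` the `k`-th summand of `p_n(z)` has modulus
`[n, k]_{q²} q^{t(n-2k)} = [n, k]_{q²} q^{-tn} (q^{2t})^{n-k}`. For `0 ≤ a < 1` every Pochhammer
symbol `(a; a)_m` lies between the constant `exp (-a / (1 - a)²) > 0` and `1`, so the
`q²`-binomials and the normalisation `1 / √((q²; q²)_n)` are bounded uniformly in `n` and `k`,
and the sum is at most a constant times `q^{-tn}` times a convergent geometric series in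
`q^{2t}`. The prefactor `q^n` turns `q^{-tn}` into `q^{(1-t)n}`.
-/

open Finset

lemma exp_neg_div_one_sub_le {x : ℝ} (hx : x < 1) : Real.exp (-(x / (1 - x))) ≤ 1 - x := by
  have h1x : 0 < 1 - x := sub_pos.2 hx
  calc Real.exp (-(x / (1 - x))) = Real.exp (1 - (1 - x)⁻¹) := by
        congr 1; field_simp; ring
    _ ≤ Real.exp (Real.log (1 - x)) := Real.exp_le_exp.2 (Real.one_sub_inv_le_log_of_pos h1x)
    _ = 1 - x := Real.exp_log h1x

lemma geom_sum_range_le {x : ℝ} (hx0 : 0 ≤ x) (hx1 : x < 1) (n : ℕ) :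
    ∑ i ∈ range n, x ^ i ≤ (1 - x)⁻¹ := by
  have h : ∑ i ∈ Ico 0 n, x ^ i ≤ x ^ 0 / (1 - x) := geom_sum_Ico_le_of_lt_one hx0 hx1
  rwa [← range_eq_Ico, pow_zero, one_div] at h

section qPoch

variable {x q : ℝ}

lemma mul_pow_mem_Icc (hx : 0 ≤ x) (hq0 : 0 ≤ q) (hq1 : q ≤ 1) (j : ℕ) :
    x * q ^ j ∈ Set.Icc 0 x :=
  Set.mem_Icc.2 ⟨by positivity, mul_le_of_le_one_right hx (pow_le_one₀ hq0 hq1)⟩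

lemma qPoch_pos (hx0 : 0 ≤ x) (hx1 : x < 1) (hq0 : 0 ≤ q) (hq1 : q ≤ 1) (k : ℕ) :
    0 < qPoch x q k :=
  prod_pos fun j _ => sub_pos.2 ((mul_pow_mem_Icc hx0 hq0 hq1 j).2.trans_lt hx1)

lemma qPoch_le_one (hx0 : 0 ≤ x) (hx1 : x ≤ 1) (hq0 : 0 ≤ q) (hq1 : q ≤ 1) (k : ℕ) :
    qPoch x q k ≤ 1 :=
  prod_le_one (fun j _ => sub_nonneg.2 ((mul_pow_mem_Icc hx0 hq0 hq1 j).2.trans hx1))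
    (fun j _ => sub_le_self _ (mul_pow_mem_Icc hx0 hq0 hq1 j).1)

/-- Each factor satisfies `1 - y ≥ exp (-y / (1 - y)) ≥ exp (-y / (1 - x))`, and the exponents
`y = x q ^ j` sum to at most `x / (1 - q)`. -/
lemma exp_neg_le_qPoch (hx0 : 0 ≤ x) (hx1 : x < 1) (hq0 : 0 ≤ q) (hq1 : q < 1) (k : ℕ) :
    Real.exp (-(x / ((1 - x) * (1 - q)))) ≤ qPoch x q k := by
  have hfactor : ∀ j ∈ range k, Real.exp (-(x * q ^ j / (1 - x))) ≤ 1 - x * q ^ j := by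
    intro j _
    obtain ⟨-, hyx⟩ := mul_pow_mem_Icc hx0 hq0 hq1.le j
    refine le_trans ?_ (exp_neg_div_one_sub_le (hyx.trans_lt hx1))
    gcongr
  calc Real.exp (-(x / ((1 - x) * (1 - q))))
      ≤ Real.exp (-(x / (1 - x) * ∑ j ∈ range k, q ^ j)) := by
        rw [div_mul_eq_div_div, div_eq_mul_inv (x / (1 - x))]
        gcongr
        exact geom_sum_range_le hq0 hq1 k
    _ = ∏ j ∈ range k, Real.exp (-(x * q ^ j / (1 - x))) := by
        rw [← Real.exp_sum, mul_sum, ← sum_neg_distrib]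
        congr 2 with j
        ring
    _ ≤ qPoch x q k := prod_le_prod (fun _ _ => (Real.exp_pos _).le) hfactor

lemma abs_qbinom_le (hq0 : 0 ≤ q) (hq1 : q < 1) (n k : ℕ) :
    |qbinom q n k| ≤ Real.exp (2 * (q / ((1 - q) * (1 - q)))) := by
  have hlow := exp_neg_le_qPoch hq0 hq1 hq0 hq1
  have hden : 0 < qPoch q q k * qPoch q q (n - k) :=
    mul_pos (qPoch_pos hq0 hq1 hq0 hq1.le k) (qPoch_pos hq0 hq1 hq0 hq1.le (n - k))
  rw [qbinom, abs_of_nonneg (div_nonneg (qPoch_pos hq0 hq1 hq0 hq1.le n).le hden.le),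
    two_mul, ← neg_neg (_ + _), Real.exp_neg, neg_add, Real.exp_add, ← one_div]
  exact div_le_div₀ zero_le_one (qPoch_le_one hq0 hq1.le hq0 hq1.le n) (by positivity)
    (mul_le_mul (hlow k) (hlow (n - k)) (Real.exp_pos _).le (qPoch_pos hq0 hq1 hq0 hq1.le k).le)

end qPoch

lemma norm_cpw {q : ℝ} (hq : 0 < q) (z : ℂ) : ‖cpw q z‖ = q ^ z.re := by
  rw [cpw, Complex.norm_exp, Real.rpow_def_of_pos hq, mul_comm]
  simp [Complex.mul_re]

lemma norm_cpw_mul_sub {q t : ℝ} (hq : 0 < q) {z : ℂ} (hz : z.re = t) {n k : ℕ} (hk : k ≤ n) :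
    ‖cpw q (z * ((n : ℂ) - 2 * (k : ℂ)))‖ = q ^ (-(t * n)) * (q ^ (2 * t)) ^ (n - k) := by
  have hre : (z * ((n : ℂ) - 2 * (k : ℂ))).re = -(t * n) + 2 * t * (n - k : ℕ) := by
    simp [Complex.mul_re, hz, Nat.cast_sub hk]
    ring
  rw [norm_cpw hq, hre, Real.rpow_add hq, Real.rpow_mul hq.le, Real.rpow_natCast]

lemma norm_sum_qbinom_mul_cpw_le {q t : ℝ} (hq0 : 0 < q) (hq1 : q < 1) (ht : 0 < t) (n : ℕ)
    {z : ℂ} (hz : z.re = t) :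
    ‖∑ k ∈ range (n + 1), (qbinom (q ^ 2) n k : ℂ) * cpw q (z * ((n : ℂ) - 2 * (k : ℂ)))‖ ≤
      Real.exp (2 * (q ^ 2 / ((1 - q ^ 2) * (1 - q ^ 2)))) * q ^ (-(t * n)) *
        (1 - q ^ (2 * t))⁻¹ := by
  set B := Real.exp (2 * (q ^ 2 / ((1 - q ^ 2) * (1 - q ^ 2))))
  set s := q ^ (2 * t)
  have hs0 : 0 ≤ s := Real.rpow_nonneg hq0.le _
  have hs1 : s < 1 := Real.rpow_lt_one hq0.le hq1 (by positivity)
  calc _ ≤ ∑ k ∈ range (n + 1), B * (q ^ (-(t * n)) * s ^ (n - k)) := by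
        refine (norm_sum_le _ _).trans (sum_le_sum fun k hk => ?_)
        rw [norm_mul, Complex.norm_real, Real.norm_eq_abs,
          norm_cpw_mul_sub hq0 hz (Nat.lt_succ_iff.1 (mem_range.1 hk))]
        gcongr
        exact abs_qbinom_le (by positivity) (pow_lt_one₀ hq0.le hq1 two_ne_zero) n k
    _ = B * q ^ (-(t * n)) * ∑ j ∈ range (n + 1), s ^ j := by
        rw [mul_sum, ← sum_range_reflect (fun k => B * q ^ (-(t * n)) * s ^ k)]
        simp only [add_tsub_cancel_right, mul_assoc]
    _ ≤ B * q ^ (-(t * n)) * (1 - s)⁻¹ := by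
        gcongr
        exact geom_sum_range_le hs0 hs1 _

lemma abs_pfun_prefactor_le {q : ℝ} (hq0 : 0 < q) (hq1 : q < 1) (n : ℕ) :
    |q ^ n / √(qPoch (q ^ 2) (q ^ 2) n)| ≤
      Real.exp (q ^ 2 / ((1 - q ^ 2) * (1 - q ^ 2)) / 2) * q ^ n := by
  set a := q ^ 2 / ((1 - q ^ 2) * (1 - q ^ 2))
  have hq2 : q ^ 2 < 1 := pow_lt_one₀ hq0.le hq1 two_ne_zero
  rw [abs_of_nonneg (by positivity)]
  calc q ^ n / √(qPoch (q ^ 2) (q ^ 2) n) ≤ q ^ n / √(Real.exp (-a)) := by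
        gcongr
        exact exp_neg_le_qPoch (by positivity) hq2 (by positivity) hq2 n
    _ = Real.exp (a / 2) * q ^ n := by
        rw [← Real.exp_half, neg_div, Real.exp_neg, div_inv_eq_mul, mul_comm]

theorem stmt6_general (q t : ℝ) (hq0 : 0 < q) (hq1 : q < 1) (ht0 : 0 < t) :
    ∃ C : ℝ, 0 < C ∧ ∀ n : ℕ, ∀ z : ℂ, z.re = t →
      ‖pfun q n z‖ ≤ C * q ^ ((1 - t) * (n : ℝ)) := by
  set a := q ^ 2 / ((1 - q ^ 2) * (1 - q ^ 2))
  have hs : 0 < 1 - q ^ (2 * t) := sub_pos.2 (Real.rpow_lt_one hq0.le hq1 (by positivity))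
  refine ⟨Real.exp (a / 2) * Real.exp (2 * a) * (1 - q ^ (2 * t))⁻¹, by positivity,
    fun n z hz => ?_⟩
  have hpow : q ^ n * q ^ (-(t * n)) = q ^ ((1 - t) * (n : ℝ)) := by
    rw [← Real.rpow_natCast, ← Real.rpow_add hq0]
    ring_nf
  rw [pfun, norm_mul, Complex.norm_real, Real.norm_eq_abs]
  calc _ ≤ (Real.exp (a / 2) * q ^ n) *
        (Real.exp (2 * a) * q ^ (-(t * n)) * (1 - q ^ (2 * t))⁻¹) :=
        mul_le_mul (abs_pfun_prefactor_le hq0 hq1 n)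
          (norm_sum_qbinom_mul_cpw_le hq0 hq1 ht0 n hz) (norm_nonneg _) (by positivity)
    _ = _ := by
        rw [← hpow]
        ring

theorem stmt6 (q t : ℝ) (hq0 : 0 < q) (hq1 : q < 1) (ht0 : 0 < t) (ht1 : t < 1) :
    ∃ C : ℝ, 0 < C ∧ ∀ n : ℕ, ∀ z : ℂ, z.re = t →
      ‖pfun q n z‖ ≤ C * q ^ ((1 - t) * (n : ℝ)) :=
  stmt6_general q t hq0 hq1 ht0
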